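/- arXiv:1104.1455 — 2 statements merged into one kernel-verified Lean document; each statement's English description precedes it below -/
import Mathlib

section
/- Let A be a unital Banach algebra and p an idempotent. There is an open neighborhood U of p in A such that for every x ∈ U the element g(p,x) = px + (1-p)(1-x) is invertible, and the map r(x) = g(p,x)⁻¹ · p · g(p,x) is a continuous retraction of U onto the set of idempotents of A similar to p that lie in U (i.e., r is continuous, r(x) is an idempotent similar to p for all x ∈ U, and r(q) = q for every idempotent q ∈ U similar to p). -/
/-- `q` is similar to `p` in `A` if `q = u⁻¹ * p * u` for some unit `u`. -/
def SimilarTo {A : Type*} [Ring A] (p q : A) : Prop :=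
  ∃ u : Aˣ, q = (↑u⁻¹ : A) * p * (↑u : A)

theorem local_holomorphic_retraction_onto_idempotents
    {A : Type*} [NormedRing A] [NormedAlgebra ℂ A] [CompleteSpace A]
    (p : A) (hp : IsIdempotentElem p) :
    ∃ U : Set A, IsOpen U ∧ p ∈ U ∧
      ∃ r : A → A, ContinuousOn r U ∧
        (∀ x ∈ U, ∃ u : Aˣ, (u : A) = p * x + (1 - p) * (1 - x) ∧
            r x = (↑u⁻¹ : A) * p * (↑u : A)) ∧
        (∀ x ∈ U, IsIdempotentElem (r x) ∧ SimilarTo p (r x)) ∧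
        (∀ q ∈ U, IsIdempotentElem q → SimilarTo p q → r q = q) := by
  set g : A → A := fun x => p * x + (1 - p) * (1 - x) with hg
  have hgc : Continuous g := by fun_prop
  refine ⟨g ⁻¹' {a | IsUnit a}, hgc.isOpen_preimage _ Units.isOpen, ?_,
    fun x => Ring.inverse (g x) * p * g x, ?_, ?_, ?_, ?_⟩
  · show IsUnit (g p)
    have : g p = 1 := by
      show p * p + (1 - p) * (1 - p) = 1
      rw [hp, hp.one_sub]
      abel
    rw [this]; exact isUnit_one
  · -- continuity
    apply ContinuousOn.mul
    apply ContinuousOn.mul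
    · intro x hx
      have hx' : IsUnit (g x) := hx
      have h := NormedRing.inverse_continuousAt hx'.unit
      rw [hx'.unit_spec] at h
      exact (h.comp hgc.continuousAt).continuousWithinAt
    · exact continuousOn_const
    · exact hgc.continuousOn
  · intro x hx
    have hx' : IsUnit (g x) := hx
    obtain ⟨u, hu⟩ := hx'
    refine ⟨u, hu, ?_⟩
    show Ring.inverse (g x) * p * g x = _
    rw [← hu, Ring.inverse_unit]
  · intro x hx
    have hx' : IsUnit (g x) := hx
    obtain ⟨u, hu⟩ := hx'
    have h1 : Ring.inverse (g x) * p * g x = (↑u⁻¹ : A) * p * (↑u : A) := by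
      rw [← hu, Ring.inverse_unit]
    have huu : (↑u : A) * (↑u⁻¹ : A) = 1 := u.mul_inv
    have hid : (↑u⁻¹ : A) * p * ↑u * ((↑u⁻¹ : A) * p * ↑u) = (↑u⁻¹ : A) * p * (↑u : A) := by
      calc (↑u⁻¹ : A) * p * ↑u * ((↑u⁻¹ : A) * p * ↑u)
          = (↑u⁻¹ : A) * p * ((↑u : A) * ↑u⁻¹) * p * ↑u := by
            simp only [mul_assoc]
        _ = (↑u⁻¹ : A) * (p * p) * ↑u := by rw [huu]; simp only [mul_one, mul_assoc]
        _ = _ := by rw [hp]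
    refine ⟨?_, u, h1⟩
    show Ring.inverse (g x) * p * g x * (Ring.inverse (g x) * p * g x) =
      Ring.inverse (g x) * p * g x
    rw [h1]; exact hid
  · intro q hq hqi _
    have hq' : IsUnit (g q) := hq
    have key : p * g q = g q * q := by
      show p * (p * q + (1 - p) * (1 - q)) = (p * q + (1 - p) * (1 - q)) * q
      have h2 : q * q = q := hqi
      have hpp : p * p = p := hp
      calc p * (p * q + (1 - p) * (1 - q))
          = p * p * q + (p - p * p) * (1 - q) := by noncomm_ring
        _ = p * q := by rw [hpp]; noncomm_ring
        _ = p * (q * q) + (1 - p) * (q - q * q) := by rw [h2]; noncomm_ring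
        _ = (p * q + (1 - p) * (1 - q)) * q := by noncomm_ring
    calc Ring.inverse (g q) * p * g q = Ring.inverse (g q) * (p * g q) := by rw [mul_assoc]
      _ = Ring.inverse (g q) * (g q * q) := by rw [key]
      _ = (Ring.inverse (g q) * g q) * q := by rw [mul_assoc]
      _ = q := by rw [Ring.inverse_mul_cancel _ hq', one_mul]
end

section
/- Conversely, if f is holomorphic on a connected open set U ⊆ ℂ with f' nonvanishing and Schw f ≡ 0 on U, then f agrees on U with a Möbius transformation, i.e., there exist α,β,γ,δ ∈ ℂ with αδ - βγ ≠ 0 and f(z) = (αz+β)/(γz+δ) for all z ∈ U. -/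
/-!
With `u = f''/f'` one has `Schw f = u' - u²/2`, so `u` solves the Riccati equation `u' = u²/2`.
Near a base point `z₀` the quotient `u / (2 + (z - z₀) u)` has zero derivative, which gives
`u · (2 - u₀ (z - z₀)) = 2 u₀` near `z₀`, and then on all of `U` by the identity theorem.
For `L z = 2 - u₀ (z - z₀)` this says `(f L)'' = f' (u L - 2 u₀) = 0`, so `f L` is affine on `U`:
`f` is a Möbius transformation, of determinant `4 f'(z₀)`.
-/

open Filter Topology

/-- The Schwarzian derivative `f'''/f' - (3/2)(f''/f')²`. -/
noncomputable def Schw (f : ℂ → ℂ) (z : ℂ) : ℂ :=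
  deriv (deriv (deriv f)) z / deriv f z - (3 / 2) * (deriv (deriv f) z / deriv f z) ^ 2

noncomputable def preSchw (f : ℂ → ℂ) (z : ℂ) : ℂ :=
  deriv (deriv f) z / deriv f z

theorem hasDerivAt_preSchw {f : ℂ → ℂ} {z : ℂ} (hf : AnalyticAt ℂ f z) (hf' : deriv f z ≠ 0) :
    HasDerivAt (preSchw f) (Schw f z + preSchw f z ^ 2 / 2) z := by
  have h1 := hf.deriv.differentiableAt.hasDerivAt
  have h2 := hf.deriv.deriv.differentiableAt.hasDerivAt
  refine (h2.fun_div h1 hf').congr_deriv ?_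
  simp only [Schw, preSchw]
  field_simp
  ring

theorem IsOpen.eq_add_mul_sub_of_hasDerivAt_of_hasDerivAt_zero {U : Set ℂ} {g g' : ℂ → ℂ}
    (hU : IsOpen U) (hUc : IsPreconnected U) (hg : ∀ z ∈ U, HasDerivAt g (g' z) z)
    (hg' : ∀ z ∈ U, HasDerivAt g' 0 z) {z₀ : ℂ} (hz₀ : z₀ ∈ U) :
    ∀ z ∈ U, g z = g z₀ + g' z₀ * (z - z₀) := by
  have hg'_const : ∀ z ∈ U, g' z = g' z₀ := fun z hz =>
    hU.is_const_of_deriv_eq_zero hUc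
      (fun w hw => (hg' w hw).differentiableAt.differentiableWithinAt)
      (fun w hw => (hg' w hw).deriv) hz hz₀
  have hdiff : ∀ z ∈ U, HasDerivAt (fun z => g z - g' z₀ * (z - z₀)) 0 z := fun z hz => by
    simpa [hg'_const z hz] using
      (hg z hz).fun_sub (((hasDerivAt_id' z).sub_const z₀).const_mul (g' z₀))
  intro z hz
  have h := hU.is_const_of_deriv_eq_zero hUc
    (fun w hw => (hdiff w hw).differentiableAt.differentiableWithinAt)
    (fun w hw => (hdiff w hw).deriv) hz hz₀
  simp only [sub_self, mul_zero, sub_zero] at h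
  linear_combination h

theorem eventually_riccati_identity {u : ℂ → ℂ} {z₀ : ℂ}
    (hu : ∀ᶠ z in 𝓝 z₀, HasDerivAt u (u z ^ 2 / 2) z) :
    ∀ᶠ z in 𝓝 z₀, u z * (2 - u z₀ * (z - z₀)) = 2 * u z₀ := by
  set Q : ℂ → ℂ := fun z => 2 + (z - z₀) * u z
  have hQ : ∀ᶠ z in 𝓝 z₀, Q z ≠ 0 := by
    have hcont : ContinuousAt Q z₀ :=
      continuousAt_const.add ((continuousAt_id.sub continuousAt_const).mul
        hu.self_of_nhds.continuousAt)
    exact hcont.eventually_ne (by simp [Q])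
  obtain ⟨ε, hε, hball⟩ := Metric.eventually_nhds_iff_ball.1 (hu.and hQ)
  have hR : ∀ z ∈ Metric.ball z₀ ε, HasDerivAt (fun z => u z / Q z) 0 z := fun z hz => by
    obtain ⟨huz, hQz⟩ := hball z hz
    have hQ' : HasDerivAt Q (u z + (z - z₀) * (u z ^ 2 / 2)) z :=
      ((((hasDerivAt_id' z).sub_const z₀).fun_mul huz).const_add 2).congr_deriv (by ring)
    refine (huz.fun_div hQ' hQz).congr_deriv ?_
    simp only [Q]
    ring
  have hR_const : ∀ z ∈ Metric.ball z₀ ε, u z / Q z = u z₀ / Q z₀ := fun z hz =>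
    Metric.isOpen_ball.is_const_of_deriv_eq_zero (convex_ball z₀ ε).isPreconnected
      (fun w hw => (hR w hw).differentiableAt.differentiableWithinAt)
      (fun w hw => (hR w hw).deriv) hz (Metric.mem_ball_self hε)
  filter_upwards [Metric.ball_mem_nhds z₀ hε] with z hz
  have h := hR_const z hz
  simp only [Q, sub_self, zero_mul, add_zero] at h
  rw [div_eq_div_iff (hball z hz).2 two_ne_zero] at h
  linear_combination h

theorem riccati_identity_of_isPreconnected {u : ℂ → ℂ} {U : Set ℂ} (hU : IsOpen U)
    (hUc : IsPreconnected U) (hu : ∀ z ∈ U, HasDerivAt u (u z ^ 2 / 2) z) {z₀ : ℂ}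
    (hz₀ : z₀ ∈ U) :
    ∀ z ∈ U, u z * (2 - u z₀ * (z - z₀)) = 2 * u z₀ := by
  have hua : AnalyticOnNhd ℂ u U :=
    DifferentiableOn.analyticOnNhd
      (fun z hz => (hu z hz).differentiableAt.differentiableWithinAt) hU
  have hlhs : AnalyticOnNhd ℂ (fun z => u z * (2 - u z₀ * (z - z₀))) U :=
    hua.mul (analyticOnNhd_const.sub
      (analyticOnNhd_const.mul (analyticOnNhd_id.sub analyticOnNhd_const)))
  exact fun z hz => hlhs.eqOn_of_preconnected_of_eventuallyEq analyticOnNhd_const hUc hz₀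
    (eventually_riccati_identity (eventually_of_mem (hU.mem_nhds hz₀) hu)) hz

theorem mul_eq_affine_of_preSchw_mul_eq {f : ℂ → ℂ} {U : Set ℂ} (hU : IsOpen U)
    (hUc : IsPreconnected U) (hf : AnalyticOnNhd ℂ f U) (hf' : ∀ z ∈ U, deriv f z ≠ 0)
    {z₀ c : ℂ} (hz₀ : z₀ ∈ U) (hL : ∀ z ∈ U, preSchw f z * (2 - c * (z - z₀)) = 2 * c) :
    ∀ z ∈ U, f z * (2 - c * (z - z₀)) = 2 * f z₀ + (2 * deriv f z₀ - c * f z₀) * (z - z₀) := by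
  have hL' : ∀ z, HasDerivAt (fun z => 2 - c * (z - z₀)) (-c) z := fun z =>
    ((((hasDerivAt_id' z).sub_const z₀).const_mul c).const_sub 2).congr_deriv (by ring)
  have hfL' : ∀ z ∈ U, HasDerivAt (fun z => f z * (2 - c * (z - z₀)))
      (deriv f z * (2 - c * (z - z₀)) - c * f z) z := fun z hz =>
    ((hf z hz).differentiableAt.hasDerivAt.fun_mul (hL' z)).congr_deriv (by ring)
  have hfL'' : ∀ z ∈ U, HasDerivAt (fun z => deriv f z * (2 - c * (z - z₀)) - c * f z) 0 z :=
    fun z hz => by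
      have h := ((hf z hz).deriv.differentiableAt.hasDerivAt.fun_mul (hL' z)).fun_sub
        ((hf z hz).differentiableAt.hasDerivAt.const_mul c)
      refine h.congr_deriv ?_
      rw [show deriv (deriv f) z = preSchw f z * deriv f z from
        (div_mul_cancel₀ _ (hf' z hz)).symm]
      linear_combination deriv f z * hL z hz
  intro z hz
  have h := hU.eq_add_mul_sub_of_hasDerivAt_of_hasDerivAt_zero hUc hfL' hfL'' hz₀ z hz
  simp only [sub_self, mul_zero, sub_zero] at h
  linear_combination h

theorem eq_div_of_mul_eq_of_det_ne_zero {K : Type*} [Field K] {w z α β γ δ : K}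
    (hdet : α * δ - β * γ ≠ 0) (h : w * (γ * z + δ) = α * z + β) :
    w = (α * z + β) / (γ * z + δ) := by
  have hden : γ * z + δ ≠ 0 := fun h0 => hdet (by linear_combination (α - γ * w) * h0 + γ * h)
  rw [eq_div_iff hden, h]

theorem schwarzian_zero_implies_moebius (f : ℂ → ℂ) (U : Set ℂ)
    (hU : IsOpen U) (hUc : IsConnected U)
    (hf : DifferentiableOn ℂ f U) (hf' : ∀ z ∈ U, deriv f z ≠ 0)
    (hS : ∀ z ∈ U, Schw f z = 0) :
    ∃ α β γ δ : ℂ, α * δ - β * γ ≠ 0 ∧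
      ∀ z ∈ U, f z = (α * z + β) / (γ * z + δ) := by
  obtain ⟨⟨z₀, hz₀⟩, hUpc⟩ := hUc
  have hfa : AnalyticOnNhd ℂ f U := hf.analyticOnNhd hU
  set u₀ := preSchw f z₀
  have hriccati : ∀ z ∈ U, preSchw f z * (2 - u₀ * (z - z₀)) = 2 * u₀ :=
    riccati_identity_of_isPreconnected hU hUpc
      (fun z hz => by simpa [hS z hz] using hasDerivAt_preSchw (hfa z hz) (hf' z hz)) hz₀
  have hfL := mul_eq_affine_of_preSchw_mul_eq hU hUpc hfa hf' hz₀ hriccati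
  set α := 2 * deriv f z₀ - u₀ * f z₀
  have hdet : α * (2 + u₀ * z₀) - (2 * f z₀ - α * z₀) * -u₀ ≠ 0 := by
    rw [show α * (2 + u₀ * z₀) - (2 * f z₀ - α * z₀) * -u₀ = 4 * deriv f z₀ by ring]
    exact mul_ne_zero (by norm_num) (hf' z₀ hz₀)
  refine ⟨α, 2 * f z₀ - α * z₀, -u₀, 2 + u₀ * z₀, hdet, fun z hz => ?_⟩
  exact eq_div_of_mul_eq_of_det_ne_zero hdet (by linear_combination hfL z hz)
end
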